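/- Let A be a unital associative algebra over a field k, and λ, μ ∈ k. Define k-linear maps W, Z, X : A ⊗ A → A ⊗ A by W(a ⊗ b) = ab ⊗ 1 + λ 1 ⊗ ab − b ⊗ a, Z(a ⊗ b) = μ ab ⊗ 1 + 1 ⊗ ab − b ⊗ a, and X(a ⊗ b) = ab ⊗ 1 + 1 ⊗ ab − b ⊗ a. Then (W, X, Z) is a WXZ-system: [W,W,W] = 0, [Z,Z,Z] = 0, [W,X,X] = 0, and [X,X,Z] = 0. -/

import Mathlib

open TensorProduct

/-- The twist map `τ : V ⊗ V → V ⊗ V`, `v ⊗ w ↦ w ⊗ v`. -/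
noncomputable def twist (k V : Type*) [Field k] [AddCommGroup V] [Module k V] :
    V ⊗[k] V →ₗ[k] V ⊗[k] V := (TensorProduct.comm k V V).toLinearMap

/-- `R¹² = R ⊗ I` acting on `(V ⊗ V) ⊗ V`. -/
noncomputable def r12 {k V : Type*} [Field k] [AddCommGroup V] [Module k V]
    (R : V ⊗[k] V →ₗ[k] V ⊗[k] V) :
    (V ⊗[k] V) ⊗[k] V →ₗ[k] (V ⊗[k] V) ⊗[k] V :=
  TensorProduct.map R LinearMap.id

/-- `R²³ = I ⊗ R` acting on `(V ⊗ V) ⊗ V`. -/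
noncomputable def r23 {k V : Type*} [Field k] [AddCommGroup V] [Module k V]
    (R : V ⊗[k] V →ₗ[k] V ⊗[k] V) :
    (V ⊗[k] V) ⊗[k] V →ₗ[k] (V ⊗[k] V) ⊗[k] V :=
  (TensorProduct.assoc k V V V).symm.toLinearMap ∘ₗ
    TensorProduct.map LinearMap.id R ∘ₗ (TensorProduct.assoc k V V V).toLinearMap

/-- `I ⊗ τ` acting on `(V ⊗ V) ⊗ V`. -/
noncomputable def iTauI (k V : Type*) [Field k] [AddCommGroup V] [Module k V] :
    (V ⊗[k] V) ⊗[k] V →ₗ[k] (V ⊗[k] V) ⊗[k] V :=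
  (TensorProduct.assoc k V V V).symm.toLinearMap ∘ₗ
    TensorProduct.map LinearMap.id (twist k V) ∘ₗ (TensorProduct.assoc k V V V).toLinearMap

/-- `R¹³ = (I ⊗ τ)(R ⊗ I)(I ⊗ τ)` acting on `(V ⊗ V) ⊗ V`. -/
noncomputable def r13 {k V : Type*} [Field k] [AddCommGroup V] [Module k V]
    (R : V ⊗[k] V →ₗ[k] V ⊗[k] V) :
    (V ⊗[k] V) ⊗[k] V →ₗ[k] (V ⊗[k] V) ⊗[k] V :=
  iTauI k V ∘ₗ r12 R ∘ₗ iTauI k V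

/-- The Yang–Baxter commutator `[R,S,T] = R¹² S¹³ T²³ − T²³ S¹³ R¹²`. -/
noncomputable def ybComm {k V : Type*} [Field k] [AddCommGroup V] [Module k V]
    (R S T : V ⊗[k] V →ₗ[k] V ⊗[k] V) :
    (V ⊗[k] V) ⊗[k] V →ₗ[k] (V ⊗[k] V) ⊗[k] V :=
  r12 R ∘ₗ r13 S ∘ₗ r23 T - r23 T ∘ₗ r13 S ∘ₗ r12 R

/-! All of `W`, `X`, `Z` belong to the family `R_{α,β}(a ⊗ b) = α ab ⊗ 1 + β 1 ⊗ ab − b ⊗ a`: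
`W = R_{1,λ}`, `Z = R_{μ,1}`, `X = R_{1,1}`. Evaluating on `a ⊗ b ⊗ c` shows that
`[R_{1,β}, R_{1,γ}, R_{1,γ}] = 0` and `[R_{α,1}, R_{α,1}, R_{γ,1}] = 0` for all parameters (the two
families are exchanged by reversing the three tensor factors and passing to `Aᵐᵒᵖ`); the four
identities are instances of these. -/

section

variable {k V : Type*} [Field k] [AddCommGroup V] [Module k V]

@[simp]
lemma r12_tmul (R : V ⊗[k] V →ₗ[k] V ⊗[k] V) (x y z : V) :
    r12 R (x ⊗ₜ y ⊗ₜ z) = R (x ⊗ₜ y) ⊗ₜ z := rfl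

@[simp]
lemma r23_tmul (R : V ⊗[k] V →ₗ[k] V ⊗[k] V) (x y z : V) :
    r23 R (x ⊗ₜ y ⊗ₜ z) = (TensorProduct.assoc k V V V).symm (x ⊗ₜ R (y ⊗ₜ z)) := rfl

@[simp]
lemma iTauI_tmul (x y z : V) : iTauI k V (x ⊗ₜ y ⊗ₜ z) = x ⊗ₜ z ⊗ₜ y := rfl

@[simp]
lemma r13_tmul (R : V ⊗[k] V →ₗ[k] V ⊗[k] V) (x y z : V) :
    r13 R (x ⊗ₜ y ⊗ₜ z) = iTauI k V (R (x ⊗ₜ z) ⊗ₜ y) := rfl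

end

section

variable {k A : Type*} [Field k] [Ring A] [Algebra k A]

noncomputable def algebraR (α β : k) : A ⊗[k] A →ₗ[k] A ⊗[k] A :=
  α • ((TensorProduct.mk k A A).flip 1 ∘ₗ LinearMap.mul' k A) +
    β • (TensorProduct.mk k A A 1 ∘ₗ LinearMap.mul' k A) - twist k A

@[simp]
lemma algebraR_tmul (α β : k) (a b : A) :
    algebraR α β (a ⊗ₜ b) = α • ((a * b) ⊗ₜ 1) + β • (1 ⊗ₜ (a * b)) - b ⊗ₜ a := rfl

theorem ybComm_algebraR_one_left (β γ : k) :
    ybComm (algebraR (A := A) 1 β) (algebraR 1 γ) (algebraR 1 γ) = 0 := by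
  refine ext_threefold fun a b c => ?_
  simp only [ybComm, LinearMap.sub_apply, LinearMap.comp_apply, LinearMap.zero_apply,
    r12_tmul, r13_tmul, r23_tmul, iTauI_tmul, algebraR_tmul, map_add, map_sub, map_smul,
    tmul_add, add_tmul, tmul_sub, sub_tmul, tmul_smul, ← smul_tmul', assoc_symm_tmul,
    mul_one, one_mul, mul_assoc, one_smul]
  module

theorem ybComm_algebraR_one_right (α γ : k) :
    ybComm (algebraR (A := A) α 1) (algebraR α 1) (algebraR γ 1) = 0 := by
  refine ext_threefold fun a b c => ?_
  simp only [ybComm, LinearMap.sub_apply, LinearMap.comp_apply, LinearMap.zero_apply,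
    r12_tmul, r13_tmul, r23_tmul, iTauI_tmul, algebraR_tmul, map_add, map_sub, map_smul,
    tmul_add, add_tmul, tmul_sub, sub_tmul, tmul_smul, ← smul_tmul', assoc_symm_tmul,
    mul_one, one_mul, mul_assoc, one_smul]
  module

end

/-- **Theorem (Nichita–Parashar).** For a unital associative `k`-algebra `A` and
`λ, μ ∈ k`, the maps `W(a⊗b) = ab⊗1 + λ 1⊗ab − b⊗a`, `Z(a⊗b) = μ ab⊗1 + 1⊗ab − b⊗a`,
`X(a⊗b) = ab⊗1 + 1⊗ab − b⊗a` form a WXZ-system. -/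
theorem algebra_WXZ_system {k A : Type*} [Field k] [Ring A] [Algebra k A] (lam mu : k) :
    let mul1 : A →ₗ[k] A ⊗[k] A := (TensorProduct.mk k A A).flip 1   -- x ↦ x ⊗ 1
    let mul2 : A →ₗ[k] A ⊗[k] A := TensorProduct.mk k A A 1          -- x ↦ 1 ⊗ x
    let W : A ⊗[k] A →ₗ[k] A ⊗[k] A :=
      mul1 ∘ₗ LinearMap.mul' k A + lam • (mul2 ∘ₗ LinearMap.mul' k A) - twist k A
    let Z : A ⊗[k] A →ₗ[k] A ⊗[k] A :=
      mu • (mul1 ∘ₗ LinearMap.mul' k A) + mul2 ∘ₗ LinearMap.mul' k A - twist k A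
    let X : A ⊗[k] A →ₗ[k] A ⊗[k] A :=
      mul1 ∘ₗ LinearMap.mul' k A + mul2 ∘ₗ LinearMap.mul' k A - twist k A
    ybComm W W W = 0 ∧ ybComm Z Z Z = 0 ∧ ybComm W X X = 0 ∧ ybComm X X Z = 0 := by
  intro mul1 mul2 W Z X
  have hW : W = algebraR 1 lam := by rw [algebraR, one_smul]
  have hZ : Z = algebraR mu 1 := by rw [algebraR, one_smul]
  have hX : X = algebraR 1 1 := by rw [algebraR, one_smul, one_smul]
  rw [hW, hZ, hX]
  exact ⟨ybComm_algebraR_one_left lam lam, ybComm_algebraR_one_right mu mu,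
    ybComm_algebraR_one_left lam 1, ybComm_algebraR_one_right 1 mu⟩
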